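/- Let p be an odd prime and n ≥ p². In the symmetric group S_n, a cycle of length p² has centralizer isomorphic to C_{p²} × S_{n−p²}, and consequently its conjugacy class size is divisible by p. Hence the alternating group A_n is not cl_p for any n and odd prime p. -/

import Mathlib

/-!
The centralizer of a `k`-cycle `σ` of `Sym(α)` is `⟨σ⟩ × Sym(α ∖ supp σ)`, of order
`k · (n - k)!`, so the class of `σ` has `(n choose k) · (k - 1)!` elements, a multiple of `p`
when `k = p²`. For odd `p` a `p²`-cycle is even, and as `[S_n : A_n] = 2` is prime to `p`, its
class in `A_n` still has size divisible by `p`; so `A_n` is not `cl_p` when `n ≥ p²`.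
When `n < p²`, every orbit of a `p`-subgroup `Q` of `S_n` has at most `p` points, so `Q` acts on
each orbit through a `p`-group of order dividing `p!`, i.e. through a cyclic group of order `1`
or `p`; hence `Q` is abelian, and so are the Sylow `p`-subgroups of `A_n`.
-/

open Equiv Equiv.Perm Subgroup Finset Nat

/-- A group `G` is `cl_p` if its Sylow `p`-subgroups are non-abelian and every `p`-element
of `G` has conjugacy class size coprime to `p`. -/
def IsClP (p : ℕ) (G : Type*) [Group G] : Prop :=
  (∀ P : Sylow p G, ¬ IsMulCommutative ↥(P : Subgroup G)) ∧
  ∀ x : G, (∃ n : ℕ, orderOf x = p ^ n) → ¬ p ∣ (Subgroup.centralizer {x}).index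

theorem Subgroup.dvd_index_centralizer_of_not_dvd_index {G : Type*} [Group G] {H : Subgroup G}
    {p : ℕ} (hp : p.Prime) (hH : ¬ p ∣ H.index) {x : H}
    (hx : p ∣ (centralizer {(x : G)}).index) : p ∣ (centralizer {x}).index := by
  have hsub : centralizer {x} = (centralizer {(x : G)}).subgroupOf H := by
    ext y
    simp [mem_subgroupOf, mem_centralizer_singleton_iff, Subtype.ext_iff]
  have hdvd : (centralizer {(x : G)}).index ∣ (centralizer {x}).index * H.index := by
    rw [hsub, ← relIndex, ← inf_relIndex_right, relIndex_mul_index inf_le_right]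
    exact index_dvd_of_le inf_le_left
  exact (hp.dvd_mul.mp (hx.trans hdvd)).resolve_right hH

namespace Equiv.Perm

variable {α : Type*} [Fintype α] [DecidableEq α] {σ : Perm α}

theorem IsCycle.kerParam_range_eq_centralizer (hσ : σ.IsCycle) :
    (OnCycleFactors.kerParam σ).range = centralizer {σ} := by
  have hker : (OnCycleFactors.toPermHom σ).ker = ⊤ := by
    refine eq_top_iff.mpr fun k _ => (OnCycleFactors.mem_ker_toPermHom_iff σ k).mpr ?_
    intro c hc
    rw [cycleFactorsFinset_eq_singleton_self_iff.mpr hσ, Finset.mem_singleton] at hc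
    subst hc
    exact mem_centralizer_singleton_iff.mp k.2
  rw [OnCycleFactors.kerParam_range_eq, hker, ← MonoidHom.range_eq_map, range_subtype]

theorem IsCycle.nonempty_centralizer_mulEquiv (hσ : σ.IsCycle) :
    Nonempty (centralizer {σ} ≃*
      Multiplicative (ZMod #σ.support) × Perm (Fin (Fintype.card α - #σ.support))) := by
  have hfactors := cycleFactorsFinset_eq_singleton_self_iff.mpr hσ
  let : Unique σ.cycleFactorsFinset :=
    { default := ⟨σ, hfactors ▸ Finset.mem_singleton_self σ⟩
      uniq := fun c => Subtype.ext <| Finset.mem_singleton.mp <| hfactors ▸ c.2 }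
  have hcyclic : zpowers σ ≃* Multiplicative (ZMod #σ.support) :=
    mulEquivOfCyclicCardEq <| by
      rw [Nat.card_zpowers, hσ.orderOf, Nat.card_congr Multiplicative.toAdd, Nat.card_zmod]
  have hfixed : Fintype.card (Function.fixedPoints σ) = Fintype.card α - #σ.support := by
    rw [card_fixedPoints, sum_cycleType]
  exact ⟨(MulEquiv.subgroupCongr hσ.kerParam_range_eq_centralizer.symm).trans <|
    (MonoidHom.ofInjective (OnCycleFactors.kerParam_injective σ)).symm.trans <|
    ((Fintype.equivFinOfCardEq hfixed).permCongrHom.prodCongr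
      ((MulEquiv.piUnique _).trans hcyclic)).trans MulEquiv.prodComm⟩

theorem IsCycle.index_centralizer (hσ : σ.IsCycle) :
    (centralizer {σ}).index = (Fintype.card α).choose #σ.support * (#σ.support - 1)! := by
  obtain ⟨e⟩ := hσ.nonempty_centralizer_mulEquiv
  have hcard : Nat.card (centralizer {σ}) = #σ.support * (Fintype.card α - #σ.support)! := by
    rw [Nat.card_congr e.toEquiv, Nat.card_prod, Nat.card_congr Multiplicative.toAdd,
      Nat.card_zmod, Nat.card_perm, Nat.card_fin]
  have hpos : 0 < #σ.support * (Fintype.card α - #σ.support)! :=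
    Nat.mul_pos (card_pos.mpr hσ.nonempty_support) (Nat.factorial_pos _)
  apply Nat.eq_of_mul_eq_mul_left hpos
  calc #σ.support * (Fintype.card α - #σ.support)! * (centralizer {σ}).index
      = (Fintype.card α)! := by
        rw [← hcard, card_mul_index, Nat.card_perm, Nat.card_eq_fintype_card]
    _ = (Fintype.card α).choose #σ.support * (#σ.support * (#σ.support - 1)!) *
          (Fintype.card α - #σ.support)! := by
        rw [Nat.mul_factorial_pred (card_pos.mpr hσ.nonempty_support).ne',
          Nat.choose_mul_factorial_mul_factorial (card_le_univ _)]
    _ = _ := by ring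

theorem IsCycle.dvd_index_centralizer (hσ : σ.IsCycle) {p : ℕ} (hp : 0 < p)
    (hpσ : p < #σ.support) : p ∣ (centralizer {σ}).index := by
  rw [hσ.index_centralizer]
  exact Dvd.dvd.mul_left (Nat.dvd_factorial hp (Nat.le_sub_one_of_lt hpσ)) _

theorem exists_isCycle_card_support {k : ℕ} (hk : 2 ≤ k) (hkα : k ≤ Fintype.card α) :
    ∃ σ : Perm α, σ.IsCycle ∧ #σ.support = k := by
  obtain ⟨σ, hσ⟩ :=
    (exists_with_cycleType_iff (α := α) (m := {k})).mpr (by simpa using ⟨hkα, hk⟩)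
  refine ⟨σ, card_cycleType_eq_one.mp (by simp [hσ]), ?_⟩
  rw [← sum_cycleType, hσ, Multiset.sum_singleton]

end Equiv.Perm

namespace IsPGroup

variable {p : ℕ} [Fact p.Prime]

theorem isMulCommutative_of_card_le {β : Type*} [Finite β] {H : Subgroup (Perm β)}
    (hH : IsPGroup p H) (hβ : Nat.card β ≤ p) : IsMulCommutative H := by
  have hp : p.Prime := Fact.out
  obtain ⟨k, hk⟩ := IsPGroup.iff_card.mp hH
  have hfact : p ^ k ∣ p * (p - 1)! := by
    rw [← hk, mul_factorial_pred hp.pos.ne']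
    exact (card_subgroup_dvd_card H).trans <|
      Nat.card_perm (α := β) ▸ factorial_dvd_factorial hβ
  have hcoprime : Nat.Coprime (p ^ k) (p - 1)! := by
    refine Nat.Coprime.pow_left k <| hp.coprime_iff_not_dvd.mpr fun h => ?_
    have := hp.dvd_factorial.mp h
    have := hp.pos
    omega
  have : IsCyclic H := isCyclic_of_card_dvd_prime (hk ▸ hcoprime.dvd_of_dvd_mul_right hfact)
  infer_instance

theorem isMulCommutative_of_card_lt_sq {α : Type*} [Finite α] {Q : Subgroup (Perm α)}
    (hQ : IsPGroup p Q) (hα : Nat.card α < p ^ 2) : IsMulCommutative Q := by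
  refine ⟨⟨fun g h => Subtype.ext <| Equiv.ext fun x => ?_⟩⟩
  have hp : p.Prime := Fact.out
  have horbit : Nat.card (MulAction.orbit Q x) ≤ p := by
    obtain ⟨a, ha⟩ := hQ.card_orbit x
    have ha2 : a < 2 := (Nat.pow_lt_pow_iff_right hp.one_lt).mp <|
      ha ▸ (Finite.card_subtype_le _).trans_lt hα
    calc _ = p ^ a := ha
      _ ≤ p ^ 1 := Nat.pow_le_pow_right hp.pos (by omega)
      _ = p := pow_one p
  let ρ := MulAction.toPermHom Q (MulAction.orbit Q x)
  have hρ : IsPGroup p ρ.range := hQ.of_surjective ρ.rangeRestrict ρ.rangeRestrict_surjective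
  have := hρ.isMulCommutative_of_card_le horbit
  have hcomm := congr($(mul_comm' (ρ.rangeRestrict g) (ρ.rangeRestrict h)).1
    ⟨x, MulAction.mem_orbit_self x⟩)
  exact congrArg Subtype.val hcomm

end IsPGroup

theorem alternatingGroup.isMulCommutative_sylow_of_card_lt_sq {α : Type*} [Fintype α]
    [DecidableEq α] {p : ℕ} [Fact p.Prime] (hα : Fintype.card α < p ^ 2)
    (P : Sylow p (alternatingGroup α)) : IsMulCommutative P := by
  have := (P.2.map (alternatingGroup α).subtype).isMulCommutative_of_card_lt_sq
    (Nat.card_eq_fintype_card (α := α) ▸ hα)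
  rw [← comap_map_eq_self_of_injective (alternatingGroup α).subtype_injective P.1]
  exact comap_injective_isMulCommutative _ (alternatingGroup α).subtype_injective

theorem alternatingGroup_not_isClP {α : Type*} [Fintype α] [DecidableEq α] {p : ℕ}
    (hp : p.Prime) (hodd : Odd p) : ¬ IsClP p (alternatingGroup α) := by
  have : Fact p.Prime := ⟨hp⟩
  rintro ⟨hSylow, hclass⟩
  rcases lt_or_ge (Fintype.card α) (p ^ 2) with hα | hα
  · obtain ⟨P⟩ : Nonempty (Sylow p (alternatingGroup α)) := inferInstance
    exact hSylow P (alternatingGroup.isMulCommutative_sylow_of_card_lt_sq hα P)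
  · have hp2 : 2 ≤ p ^ 2 := hp.two_le.trans (Nat.le_self_pow two_ne_zero p)
    obtain ⟨σ, hσ, hcard⟩ := exists_isCycle_card_support hp2 hα
    have hσA : σ ∈ alternatingGroup α := by
      rw [mem_alternatingGroup, hσ.sign, hcard, hodd.pow.neg_one_pow, neg_neg]
    have : Nontrivial α := Fintype.one_lt_card_iff_nontrivial.mp (by omega)
    refine hclass ⟨σ, hσA⟩ ⟨2, by rw [orderOf_mk, hσ.orderOf, hcard]⟩ ?_
    refine dvd_index_centralizer_of_not_dvd_index hp ?_ (hσ.dvd_index_centralizer hp.pos ?_)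
    · rw [alternatingGroup.index_eq_two]
      exact hp.coprime_iff_not_dvd.mp (coprime_two_right.mpr hodd)
    · rw [hcard]
      exact lt_self_pow₀ hp.one_lt one_lt_two

theorem alternating_not_clp_general (p n : ℕ) (hp : p.Prime) (hodd : Odd p)
    (σ : Equiv.Perm (Fin n)) (hσ : σ.IsCycle) (hcard : σ.support.card = p ^ 2) :
    Nonempty ((Subgroup.centralizer {σ} : Subgroup (Equiv.Perm (Fin n))) ≃*
        Multiplicative (ZMod (p ^ 2)) × Equiv.Perm (Fin (n - p ^ 2))) ∧
    p ∣ (Subgroup.centralizer {σ} : Subgroup (Equiv.Perm (Fin n))).index ∧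
    ∀ m : ℕ, ¬ IsClP p (alternatingGroup (Fin m)) := by
  refine ⟨?_, hσ.dvd_index_centralizer hp.pos ?_, fun m => alternatingGroup_not_isClP hp hodd⟩
  · have e := hσ.nonempty_centralizer_mulEquiv
    rwa [hcard, Fintype.card_fin] at e
  · exact hcard ▸ lt_self_pow₀ hp.one_lt one_lt_two

/-- For an odd prime `p` and `n ≥ p²`, a cycle `σ` of length `p²` in `S_n` has centralizer
isomorphic to `C_{p²} × S_{n-p²}`, its class size is divisible by `p`, and consequently no
alternating group is `cl_p`. -/
theorem alternating_not_clp (p n : ℕ) (hp : p.Prime) (hodd : Odd p) (hn : p ^ 2 ≤ n)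
    (σ : Equiv.Perm (Fin n)) (hσ : σ.IsCycle) (hcard : σ.support.card = p ^ 2) :
    Nonempty ((Subgroup.centralizer {σ} : Subgroup (Equiv.Perm (Fin n))) ≃*
        Multiplicative (ZMod (p ^ 2)) × Equiv.Perm (Fin (n - p ^ 2))) ∧
    p ∣ (Subgroup.centralizer {σ} : Subgroup (Equiv.Perm (Fin n))).index ∧
    ∀ m : ℕ, ¬ IsClP p (alternatingGroup (Fin m)) :=
  alternating_not_clp_general p n hp hodd σ hσ hcard
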